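/- Let n be C² and strictly positive on an open set U ⊆ ℝ³, let τ be C³ on U with |∇τ(x)|² = n(x)² on U, and let γ : I → U satisfy γ'(s) = ∇τ(γ(s))/n(γ(s))². Then along γ the identity d/ds [Δτ(γ(s))] + n(γ(s))⁻² · Σ_{i,j=1}^{3} (∂_{x_i}∂_{x_j}τ(γ(s)))² = n⁻²|∇n|²(γ(s)) + n⁻¹Δn(γ(s)) holds for every s ∈ I. (Identity (7.1) in the proof of Lemma 3.1.) -/

import Mathlib

/- STATEMENT 1 (identity (7.1) in the proof of Lemma 3.1):
   d/ds [Δτ(γ(s))] + n⁻² Σ_{i,j} (∂_i∂_j τ)² = n⁻²|∇n|² + n⁻¹Δn along a geodesic. -/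

open Real Set

/-- The partial derivative `∂_{x_i} f` of `f : ℝ³ → ℝ`. -/
noncomputable def pd (i : Fin 3) (f : (Fin 3 → ℝ) → ℝ) (x : Fin 3 → ℝ) : ℝ :=
  fderiv ℝ f x (Pi.single i 1)

/-- The Laplacian `Δ f = Σᵢ ∂_{x_i}² f`. -/
noncomputable def lap (f : (Fin 3 → ℝ) → ℝ) (x : Fin 3 → ℝ) : ℝ :=
  ∑ i : Fin 3, pd i (pd i f) x

/-! Differentiating the eikonal equation `|∇τ|² = n²` in `x_j` gives `∑ᵢ ∂ᵢτ ∂ⱼ∂ᵢτ = n ∂ⱼn`;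
differentiating once more in `x_j`, summing over `j` and commuting third derivatives gives
`∑ᵢⱼ (∂ᵢ∂ⱼτ)² + ∇τ · ∇Δτ = |∇n|² + n Δn`. Along a geodesic the chain rule gives
`d/ds Δτ(γ) = ∇τ · ∇Δτ / n²`, and the identity follows. -/

variable {U : Set (Fin 3 → ℝ)} {f g : (Fin 3 → ℝ) → ℝ} {x : Fin 3 → ℝ}

lemma contDiffOn_pd {m k : WithTop ℕ∞} (hU : IsOpen U) (hf : ContDiffOn ℝ k f U)
    (hmk : m + 1 ≤ k) (i : Fin 3) : ContDiffOn ℝ m (pd i f) U :=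
  (hf.fderiv_of_isOpen hU hmk).clm_apply contDiffOn_const

lemma contDiffOn_lap {m k : WithTop ℕ∞} (hU : IsOpen U) (hf : ContDiffOn ℝ k f U)
    (hmk : m + 2 ≤ k) : ContDiffOn ℝ m (lap f) U := by
  have hm : m + 1 + 1 ≤ k := by rwa [add_assoc, one_add_one_eq_two]
  exact ContDiffOn.sum fun i _ =>
    contDiffOn_pd hU (contDiffOn_pd hU hf hm i) le_rfl i

lemma differentiableAt_pd {k : WithTop ℕ∞} (hU : IsOpen U) (hf : ContDiffOn ℝ k f U)
    (hk : 2 ≤ k) (hx : x ∈ U) (i : Fin 3) : DifferentiableAt ℝ (pd i f) x :=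
  ((contDiffOn_pd hU hf (m := 1) hk i).contDiffAt (hU.mem_nhds hx)).differentiableAt one_ne_zero

lemma fderiv_apply_eq_sum_pd (v : Fin 3 → ℝ) : fderiv ℝ f x v = ∑ i, v i * pd i f x := by
  conv_lhs => rw [← Finset.univ_sum_single v]
  rw [map_sum]
  refine Finset.sum_congr rfl fun i _ => ?_
  rw [show Pi.single i (v i) = v i • (Pi.single i 1 : Fin 3 → ℝ) by
    rw [← Pi.single_smul, smul_eq_mul, mul_one], map_smul, smul_eq_mul]
  rfl

lemma pd_mul (hf : DifferentiableAt ℝ f x) (hg : DifferentiableAt ℝ g x) (i : Fin 3) :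
    pd i (fun y => f y * g y) x = pd i f x * g x + f x * pd i g x := by
  simp only [pd, fderiv_fun_mul hf hg, add_apply, smul_apply, smul_eq_mul]
  ring

lemma pd_sq (hf : DifferentiableAt ℝ f x) (i : Fin 3) :
    pd i (fun y => f y ^ 2) x = 2 * f x * pd i f x := by
  simp only [sq, pd_mul hf hf]
  ring

lemma pd_sum {ι : Type*} (s : Finset ι) {F : ι → (Fin 3 → ℝ) → ℝ}
    (hF : ∀ k ∈ s, DifferentiableAt ℝ (F k) x) (i : Fin 3) :
    pd i (fun y => ∑ k ∈ s, F k y) x = ∑ k ∈ s, pd i (F k) x := by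
  simp only [pd, fderiv_fun_sum hF, sum_apply]

lemma pd_congr (hU : IsOpen U) (hfg : EqOn f g U) (hx : x ∈ U) (i : Fin 3) :
    pd i f x = pd i g x := by
  simp only [pd, (Filter.eventuallyEq_of_mem (hU.mem_nhds hx) hfg).fderiv_eq]

lemma pd_comm (hU : IsOpen U) (hf : ContDiffOn ℝ 2 f U) (hx : x ∈ U) (i j : Fin 3) :
    pd i (pd j f) x = pd j (pd i f) x := by
  have hnhds := hU.mem_nhds hx
  have hd : DifferentiableAt ℝ (fderiv ℝ f) x :=
    ((hf.fderiv_of_isOpen hU (m := 1) (by norm_num)).contDiffAt hnhds).differentiableAt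
      one_ne_zero
  have hpd : ∀ v w, fderiv ℝ (fun y => fderiv ℝ f y v) x w = fderiv ℝ (fderiv ℝ f) x w v := by
    intro v w
    simp [fderiv_clm_apply hd (differentiableAt_const v)]
  show fderiv ℝ (fun y => fderiv ℝ f y (Pi.single j 1)) x (Pi.single i 1)
    = fderiv ℝ (fun y => fderiv ℝ f y (Pi.single i 1)) x (Pi.single j 1)
  rw [hpd, hpd]
  exact (hf.contDiffAt hnhds).isSymmSndFDerivAt (by simp) _ _

lemma pd_pd_pd_comm (hU : IsOpen U) (hf : ContDiffOn ℝ 3 f U) (hx : x ∈ U) (i j : Fin 3) :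
    pd j (pd j (pd i f)) x = pd i (pd j (pd j f)) x := by
  have hf₂ : ContDiffOn ℝ 2 f U := hf.of_le (by norm_num)
  calc pd j (pd j (pd i f)) x = pd j (pd i (pd j f)) x :=
        pd_congr hU (fun y hy => pd_comm hU hf₂ hy j i) hx j
    _ = pd i (pd j (pd j f)) x := pd_comm hU (contDiffOn_pd hU hf (by norm_num) j) hx j i

variable {n τ : (Fin 3 → ℝ) → ℝ}

lemma eikonal_pd (hU : IsOpen U) (hn : ContDiffOn ℝ 2 n U) (hτ : ContDiffOn ℝ 3 τ U)
    (heik : ∀ x ∈ U, ∑ i, (pd i τ x) ^ 2 = (n x) ^ 2) (hx : x ∈ U) (j : Fin 3) :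
    ∑ i, pd i τ x * pd j (pd i τ) x = n x * pd j n x := by
  have hdτ : ∀ i, DifferentiableAt ℝ (pd i τ) x :=
    differentiableAt_pd hU hτ (by norm_num) hx
  have hdn : DifferentiableAt ℝ n x :=
    (hn.contDiffAt (hU.mem_nhds hx)).differentiableAt (by norm_num)
  have h := pd_congr hU heik hx j
  rw [pd_sum (F := fun i y => pd i τ y ^ 2) _ (fun i _ => (hdτ i).pow 2), pd_sq hdn] at h
  simp only [pd_sq (hdτ _), mul_assoc, ← Finset.mul_sum] at h
  linarith

lemma eikonal_pd_pd (hU : IsOpen U) (hn : ContDiffOn ℝ 2 n U) (hτ : ContDiffOn ℝ 3 τ U)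
    (heik : ∀ x ∈ U, ∑ i, (pd i τ x) ^ 2 = (n x) ^ 2) (hx : x ∈ U) (j : Fin 3) :
    ∑ i, ((pd j (pd i τ) x) ^ 2 + pd i τ x * pd j (pd j (pd i τ)) x)
      = (pd j n x) ^ 2 + n x * pd j (pd j n) x := by
  have hdτ : ∀ i, DifferentiableAt ℝ (pd i τ) x :=
    differentiableAt_pd hU hτ (by norm_num) hx
  have hdτ₂ : ∀ i, DifferentiableAt ℝ (pd j (pd i τ)) x := fun i =>
    differentiableAt_pd hU (contDiffOn_pd hU hτ (m := 2) (by norm_num) i) le_rfl hx j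
  have hdn : DifferentiableAt ℝ n x :=
    (hn.contDiffAt (hU.mem_nhds hx)).differentiableAt (by norm_num)
  have h := pd_congr hU (fun y hy => eikonal_pd hU hn hτ heik hy j) hx j
  rw [pd_sum (F := fun i y => pd i τ y * pd j (pd i τ) y) _
      (fun i _ => (hdτ i).mul (hdτ₂ i)), pd_mul hdn (differentiableAt_pd hU hn le_rfl hx j)] at h
  simp only [pd_mul (hdτ _) (hdτ₂ _)] at h
  simpa only [sq] using h

lemma sum_pd_mul_pd_lap (hU : IsOpen U) (hn : ContDiffOn ℝ 2 n U) (hτ : ContDiffOn ℝ 3 τ U)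
    (heik : ∀ x ∈ U, ∑ i, (pd i τ x) ^ 2 = (n x) ^ 2) (hx : x ∈ U) :
    ∑ i, pd i τ x * pd i (lap τ) x
      = ∑ i, (pd i n x) ^ 2 + n x * lap n x - ∑ i, ∑ j, (pd i (pd j τ) x) ^ 2 := by
  have hpd_lap : ∀ i, pd i (lap τ) x = ∑ j, pd j (pd j (pd i τ)) x := fun i => by
    rw [show lap τ = fun y => ∑ j, pd j (pd j τ) y from rfl, pd_sum _ fun j _ =>
      differentiableAt_pd hU (contDiffOn_pd hU hτ (m := 2) (by norm_num) j) le_rfl hx j]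
    exact Finset.sum_congr rfl fun j _ => (pd_pd_pd_comm hU hτ hx i j).symm
  have h := Finset.sum_congr rfl fun j (_ : j ∈ Finset.univ) => eikonal_pd_pd hU hn hτ heik hx j
  simp only [Finset.sum_add_distrib] at h
  rw [Finset.sum_comm (f := fun j i => pd i τ x * pd j (pd j (pd i τ)) x)] at h
  simp only [hpd_lap, Finset.mul_sum, lap]
  linarith

lemma hasDerivAt_comp_sum_pd {γ : ℝ → Fin 3 → ℝ} {v : Fin 3 → ℝ} {s : ℝ}
    (hf : DifferentiableAt ℝ f (γ s)) (hγ : HasDerivAt γ v s) :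
    HasDerivAt (fun u => f (γ u)) (∑ i, v i * pd i f (γ s)) s := by
  rw [← fderiv_apply_eq_sum_pd]
  exact hf.hasFDerivAt.comp_hasDerivAt s hγ

theorem stmt1
    (U : Set (Fin 3 → ℝ)) (hU : IsOpen U)
    (n : (Fin 3 → ℝ) → ℝ) (hn : ContDiffOn ℝ 2 n U)
    (hnpos : ∀ x ∈ U, 0 < n x)
    (τ : (Fin 3 → ℝ) → ℝ) (hτ : ContDiffOn ℝ 3 τ U)
    (heik : ∀ x ∈ U, ∑ i : Fin 3, (pd i τ x) ^ 2 = (n x) ^ 2)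
    (I : Set ℝ) (γ : ℝ → (Fin 3 → ℝ))
    (hγU : ∀ s ∈ I, γ s ∈ U)
    (hgeo : ∀ s ∈ I, HasDerivAt γ (fun i => pd i τ (γ s) / (n (γ s)) ^ 2) s) :
    ∀ s ∈ I,
      HasDerivAt (fun u => lap τ (γ u))
        ((n (γ s) ^ 2)⁻¹ * (∑ i : Fin 3, (pd i n (γ s)) ^ 2)
          + (n (γ s))⁻¹ * lap n (γ s)
          - (n (γ s) ^ 2)⁻¹ * ∑ i : Fin 3, ∑ j : Fin 3, (pd i (pd j τ) (γ s)) ^ 2) s := by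
  intro s hs
  have hx : γ s ∈ U := hγU s hs
  have hdlap : DifferentiableAt ℝ (lap τ) (γ s) :=
    ((contDiffOn_lap hU hτ (m := 1) (by norm_num)).contDiffAt (hU.mem_nhds hx)).differentiableAt
      one_ne_zero
  convert hasDerivAt_comp_sum_pd hdlap (hgeo s hs) using 1
  have hn₀ : n (γ s) ≠ 0 := (hnpos _ hx).ne'
  simp only [div_mul_eq_mul_div, ← Finset.sum_div, sum_pd_mul_pd_lap hU hn hτ heik hx]
  field_simp
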